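/- arXiv:2212.01787 — 2 statements merged into one kernel-verified Lean document; each statement's English description precedes it below -/
import Mathlib

section
/- Let M be a monoid, N a sharp fs monoid (sharp, saturated, and finitely generated), and i₁, i₂ : N → M morphisms of monoids, neither of which is injective. Then there exist elements n₁, n₂ ∈ N^gp \ N such that the saturation of the submonoid of N^gp generated by N, -n₁ and -n₂ is a sharp fs monoid, and i₁^gp(n₁) = 0 and i₂^gp(n₂) = 0. -/
/-- `η : M →+ G` exhibits the abelian group `G` as the groupification of the
commutative monoid `M`. -/
def IsGroupification {M G : Type*} [AddCommMonoid M] [AddCommGroup G] (η : M →+ G) : Prop :=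
  (∀ x : G, ∃ a b : M, x = η a - η b) ∧
  (∀ a b : M, η a = η b ↔ ∃ k : M, a + k = b + k)

/-- A commutative monoid is sharp if its unit group is trivial. -/
def IsSharp (M : Type*) [AddCommMonoid M] : Prop := ∀ x : M, IsAddUnit x → x = 0

/-- A morphism of monoids is local if the preimage of the unit group is the unit group. -/
def IsLocalMonoidHom {N M : Type*} [AddCommMonoid N] [AddCommMonoid M] (f : N →+ M) : Prop :=
  ∀ n : N, IsAddUnit (f n) → IsAddUnit n

/-- `(P, iM, iL)` is the push-out `M ⊔_N L` of `f : N →+ M` and `g : N →+ L` in the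
category of commutative monoids. -/
def IsMonPushout {N M L P : Type*} [AddCommMonoid N] [AddCommMonoid M] [AddCommMonoid L]
    [AddCommMonoid P] (f : N →+ M) (g : N →+ L) (iM : M →+ P) (iL : L →+ P) : Prop :=
  iM.comp f = iL.comp g ∧
  ∀ (Q : Type*) [AddCommMonoid Q] (jM : M →+ Q) (jL : L →+ Q),
    jM.comp f = jL.comp g → ∃! h : P →+ Q, h.comp iM = jM ∧ h.comp iL = jL

/-- The saturation of a subset `P` of an abelian group `G`:
`P^sat = { x ∈ G | ∃ a ≥ 1, a • x ∈ P }`. -/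
def saturationOf {G : Type*} [AddCommGroup G] (P : Set G) : Set G :=
  {x : G | ∃ a : ℕ, 0 < a ∧ a • x ∈ P}

/-!
Let `P` be the image of `N` in `N^gp`: a sharp saturated submonoid of a finitely generated group,
which is therefore torsion-free. Non-injectivity of `iₖ` gives nonzero elements of `ker Iₖ`, and
up to sign they lie outside `P`. Since `P` is saturated, the sign of `n₂` can moreover be chosen
so that no nontrivial combination `m • n₁ + n • n₂` with `m n : ℕ` lies in `P`. This condition
makes `⟨P, -n₁, -n₂⟩` sharp, sharpness passes to the saturation because the group is
torsion-free, and the saturation is finitely generated by Gordan's lemma.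
-/

theorem Module.Basis.abs_repr_le_of_nsmul_eq_sum {G ι κ : Type*} [AddCommGroup G] [Fintype κ]
    (b : Module.Basis ι ℤ G) (g : κ → G) {a : ℕ} (ha : 0 < a) {c : κ → ℕ} (hc : ∀ k, c k ≤ a)
    {y : G} (hy : a • y = ∑ k, c k • g k) (j : ι) : |b.repr y j| ≤ ∑ k, |b.repr (g k) j| := by
  have hrepr : (a : ℤ) * b.repr y j = ∑ k, (c k : ℤ) * b.repr (g k) j := by
    simpa [Finsupp.smul_apply, nsmul_eq_mul] using congrArg (fun z => b.repr z j) hy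
  have hbound : (a : ℤ) * |b.repr y j| ≤ a * ∑ k, |b.repr (g k) j| :=
    calc (a : ℤ) * |b.repr y j| = |∑ k, (c k : ℤ) * b.repr (g k) j| := by
          rw [← hrepr, abs_mul, Nat.abs_cast]
      _ ≤ ∑ k, (c k : ℤ) * |b.repr (g k) j| := by
          simpa only [abs_mul, Nat.abs_cast] using
            Finset.abs_sum_le_sum_abs (fun k => (c k : ℤ) * b.repr (g k) j) Finset.univ
      _ ≤ a * ∑ k, |b.repr (g k) j| := by
          rw [Finset.mul_sum]
          gcongr with k
          exact_mod_cast hc k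
  exact le_of_mul_le_mul_left hbound (Int.natCast_pos.mpr ha)

namespace AddSubmonoid

variable {G : Type*} [AddCommGroup G]

def nsmulSaturation (S : AddSubmonoid G) : AddSubmonoid G where
  carrier := saturationOf S
  zero_mem' := ⟨1, one_pos, by simp⟩
  add_mem' := by
    rintro x y ⟨a, ha, hax⟩ ⟨c, hc, hcy⟩
    refine ⟨a * c, Nat.mul_pos ha hc, ?_⟩
    rw [smul_add, mul_comm, mul_smul, mul_comm, mul_smul]
    exact S.add_mem (S.nsmul_mem hax c) (S.nsmul_mem hcy a)

theorem le_nsmulSaturation (S : AddSubmonoid G) : S ≤ S.nsmulSaturation :=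
  fun x hx => ⟨1, one_pos, by simpa using hx⟩

theorem nsmulSaturated_nsmulSaturation (S : AddSubmonoid G) :
    S.nsmulSaturation.NSMulSaturated := by
  rintro n x ⟨c, hc, hcnx⟩
  rcases n.eq_zero_or_pos with hn | hn
  · exact .inl hn
  · exact .inr ⟨c * n, Nat.mul_pos hc hn, by rwa [mul_smul]⟩

theorem NSMulSaturated.eq_zero_of_nsmul_mem {P : AddSubmonoid G} (hP : P.NSMulSaturated)
    {a : G} (ha : a ∉ P) {n : ℕ} (hn : n • a ∈ P) : n = 0 :=
  (hP hn).resolve_right ha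

def IsSharp (P : AddSubmonoid G) : Prop :=
  ∀ x ∈ P, -x ∈ P → x = 0

theorem IsSharp.isAddTorsionFree {P : AddSubmonoid G} (hP : P.IsSharp) (hsat : P.NSMulSaturated) :
    IsAddTorsionFree G := by
  have hmem : ∀ {n : ℕ} {x : G}, n ≠ 0 → n • x = 0 → x ∈ P := fun hn hnx =>
    (hsat (hnx ▸ P.zero_mem)).resolve_left hn
  refine ⟨fun n hn x y hxy => sub_eq_zero.mp ?_⟩
  have hn0 : n • (x - y) = 0 := by rw [smul_sub, sub_eq_zero]; exact hxy
  exact hP _ (hmem hn hn0) (hmem hn (by rw [smul_neg, hn0, neg_zero]))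

theorem IsSharp.nsmulSaturation [IsAddTorsionFree G] {P : AddSubmonoid G} (hP : P.IsSharp) :
    P.nsmulSaturation.IsSharp := by
  rintro x ⟨a, ha, hax⟩ ⟨c, hc, hcx⟩
  have hcax : (c * a) • x = 0 := by
    refine hP _ (by rw [mul_smul]; exact P.nsmul_mem hax c) ?_
    rw [mul_comm, mul_smul, ← smul_neg, ← smul_neg]
    exact P.nsmul_mem hcx a
  exact (nsmul_eq_zero_iff_right (Nat.mul_pos hc ha).ne').mp hcax

def AvoidsCone (P : AddSubmonoid G) (a b : G) : Prop :=
  ∀ m n : ℕ, m • a + n • b ∈ P → m = 0 ∧ n = 0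

theorem AvoidsCone.right_notMem {P : AddSubmonoid G} {a b : G} (h : P.AvoidsCone a b) : b ∉ P :=
  fun hb => one_ne_zero (h 0 1 (by simpa using hb)).2

theorem NSMulSaturated.exists_pos_of_not_avoidsCone {P : AddSubmonoid G} (hP : P.NSMulSaturated)
    {a b : G} (ha : a ∉ P) (h : ¬ P.AvoidsCone a b) : ∃ m n : ℕ, 0 < n ∧ m • a + n • b ∈ P := by
  simp only [AvoidsCone, not_forall, not_and_or] at h
  obtain ⟨m, n, hmn, hne⟩ := h
  refine ⟨m, n, Nat.pos_of_ne_zero fun hn => ?_, hmn⟩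
  subst hn
  exact hne.elim (· (hP.eq_zero_of_nsmul_mem ha (by simpa using hmn))) (· rfl)

theorem NSMulSaturated.avoidsCone_or_avoidsCone_neg {P : AddSubmonoid G} (hP : P.NSMulSaturated)
    {a b : G} (ha : a ∉ P) (hb : b ∉ P) : P.AvoidsCone a b ∨ P.AvoidsCone a (-b) := by
  -- If both fail, `n'` times the first relation plus `n` times the second is a multiple of `a`
  -- lying in `P`, which forces both relations to be multiples of `b` alone.
  by_contra! h
  obtain ⟨m, n, hn, hmn⟩ := hP.exists_pos_of_not_avoidsCone ha h.1
  obtain ⟨m', n', hn', hmn'⟩ := hP.exists_pos_of_not_avoidsCone ha h.2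
  have hcomb : (n' * m + n * m') • a ∈ P := by
    have := P.add_mem (P.nsmul_mem hmn n') (P.nsmul_mem hmn' n)
    rwa [show n' • (m • a + n • b) + n • (m' • a + n' • -b) = (n' * m + n * m') • a by module]
      at this
  have hm : m = 0 := by
    have hzero := Nat.eq_zero_of_add_eq_zero (hP.eq_zero_of_nsmul_mem ha hcomb)
    exact (Nat.mul_eq_zero.mp hzero.1).resolve_left hn'.ne'
  subst hm
  exact hn.ne' (hP.eq_zero_of_nsmul_mem hb (by simpa using hmn))

theorem IsSharp.closure_union_neg_pair {P : AddSubmonoid G} (hP : P.IsSharp) {a b : G}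
    (h : P.AvoidsCone a b) : (closure ((P : Set G) ∪ {-a, -b})).IsSharp := by
  intro x hx hx'
  rw [closure_union, closure_eq] at hx hx'
  obtain ⟨p, hp, _, hmn, rfl⟩ := mem_sup.mp hx
  obtain ⟨m, n, rfl⟩ := (mem_closure_pair _ _ _).mp hmn
  obtain ⟨q, hq, _, hmn', hpq⟩ := mem_sup.mp hx'
  obtain ⟨m', n', rfl⟩ := (mem_closure_pair _ _ _).mp hmn'
  have hsum : (m + m') • a + (n + n') • b = p + q := by
    linear_combination (norm := module) -hpq
  obtain ⟨hm, hn⟩ := h _ _ (hsum ▸ P.add_mem hp hq)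
  obtain ⟨rfl, rfl⟩ : m = 0 ∧ n = 0 := by omega
  obtain ⟨rfl, rfl⟩ : m' = 0 ∧ n' = 0 := by omega
  simp only [zero_smul, add_zero] at hpq ⊢
  exact hP p hp (hpq ▸ hq)

/-- **Gordan's lemma**: the saturation is generated by the generators of `S` together with the
finitely many points of the saturation in the zonotope `∑ [0, 1] • g` they span. -/
theorem FG.nsmulSaturation [Module.Free ℤ G] [Module.Finite ℤ G] {S : AddSubmonoid G}
    (hS : S.FG) : S.nsmulSaturation.FG := by
  classical
  obtain ⟨T, rfl⟩ := hS
  set b := Module.Free.chooseBasis ℤ G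
  set B : Module.Free.ChooseBasisIndex ℤ G → ℤ := fun j => ∑ g : T, |b.repr g j|
  set D : Set G := {x | x ∈ (closure (T : Set G)).nsmulSaturation ∧ ∀ j, |b.repr x j| ≤ B j}
  have hD : D.Finite := by
    refine ((Set.finite_Icc (-B) B).preimage b.equivFun.injective.injOn).subset ?_
    rintro x ⟨-, hx⟩
    exact ⟨fun j => neg_le_of_abs_le (hx j), fun j => le_of_abs_le (hx j)⟩
  refine (fg_iff _).2 ⟨T ∪ D, le_antisymm ?_ ?_, T.finite_toSet.union hD⟩
  · rw [closure_le]
    rintro x (hx | hx)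
    exacts [le_nsmulSaturation _ (subset_closure hx), hx.1]
  rintro x ⟨a, ha, hax⟩
  obtain ⟨c, hc⟩ := mem_closure_finset'.mp hax
  set y := x - ∑ g : T, (c g / a) • (g : G)
  have hy : a • y = ∑ g : T, (c g % a) • (g : G) := by
    rw [smul_sub, hc, Finset.smul_sum, ← Finset.sum_sub_distrib]
    refine Finset.sum_congr rfl fun g _ => ?_
    rw [sub_eq_iff_eq_add', smul_smul, ← add_nsmul, Nat.div_add_mod]
  have hyD : y ∈ D := by
    refine ⟨⟨a, ha, hy ▸ sum_mem _ fun g _ => nsmul_mem (subset_closure g.2) _⟩, fun j => ?_⟩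
    exact b.abs_repr_le_of_nsmul_eq_sum _ ha (fun g => (Nat.mod_lt _ ha).le) hy j
  have hT : ∀ g : T, (g : G) ∈ closure ((T : Set G) ∪ D) := fun g => subset_closure (.inl g.2)
  rw [← sub_add_cancel x (∑ g : T, (c g / a) • (g : G))]
  exact add_mem (subset_closure (Or.inr hyD)) (sum_mem _ fun g _ => nsmul_mem (hT g) _)

end AddSubmonoid

theorem IsSharp.mrange_isSharp {N G : Type*} [AddCommMonoid N] [AddCommGroup G] {η : N →+ G}
    (hN : IsSharp N) (hη : Function.Injective η) : (AddMonoidHom.mrange η).IsSharp := by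
  rintro _ ⟨a, rfl⟩ ⟨b, hb⟩
  have hab : a + b = 0 := hη (by rw [map_add, hb, add_neg_cancel, map_zero])
  rw [hN a (.of_add_eq_zero b hab), map_zero]

theorem IsGroupification.addGroup_fg {N G : Type*} [AddCommMonoid N] [AddCommGroup G]
    [AddMonoid.FG N] {η : N →+ G} (hη : IsGroupification η) : AddGroup.FG G := by
  classical
  obtain ⟨T, hT⟩ := AddMonoid.FG.fg_top (M := N)
  set H := AddSubgroup.closure ((T.image η : Finset G) : Set G)
  have hηH : ∀ n, η n ∈ H := by
    have : AddSubmonoid.closure (T : Set N) ≤ H.toAddSubmonoid.comap η :=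
      AddSubmonoid.closure_le.2 fun n hn => AddSubgroup.subset_closure (by simpa using ⟨n, hn, rfl⟩)
    exact fun n => this (hT ▸ AddSubmonoid.mem_top n)
  refine ⟨⟨T.image η, eq_top_iff.2 fun x _ => ?_⟩⟩
  obtain ⟨a, b, rfl⟩ := hη.1 x
  exact sub_mem (hηH a) (hηH b)

theorem exists_map_eq_zero_notMem_mrange {N M GN GM : Type*} [AddCommMonoid N] [AddCommMonoid M]
    [AddCommGroup GN] [AddCommGroup GM] {ηN : N →+ GN} {ηM : M →+ GM} {i : N →+ M}
    {I : GN →+ GM} (hηN : Function.Injective ηN) (hP : (AddMonoidHom.mrange ηN).IsSharp)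
    (hI : I.comp ηN = ηM.comp i) (hi : ¬ Function.Injective i) :
    ∃ v ∉ AddMonoidHom.mrange ηN, I v = 0 := by
  obtain ⟨a, b, hab, hne⟩ := Function.not_injective_iff.mp hi
  have hv : I (ηN a - ηN b) = 0 := by
    rw [map_sub, ← AddMonoidHom.comp_apply, ← AddMonoidHom.comp_apply, hI,
      AddMonoidHom.comp_apply, AddMonoidHom.comp_apply, hab, sub_self]
  by_cases h : ηN a - ηN b ∈ AddMonoidHom.mrange ηN
  · refine ⟨-(ηN a - ηN b), fun h' => ?_, by rw [map_neg, hv, neg_zero]⟩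
    exact sub_ne_zero.mpr (hηN.ne hne) (hP _ h h')
  · exact ⟨_, h, hv⟩

theorem stmt2_general {N M GN GM : Type*} [AddCommMonoid N] [AddCommMonoid M]
    [AddCommGroup GN] [AddCommGroup GM]
    (ηN : N →+ GN) (hgpN : IsGroupification ηN) (hNinj : Function.Injective ηN)
    (hNsharp : IsSharp N) (hNfg : AddMonoid.FG N)
    (hNsat : ∀ x : GN, (∃ a : ℕ, 0 < a ∧ a • x ∈ AddMonoidHom.mrange ηN) →
      x ∈ AddMonoidHom.mrange ηN)
    (ηM : M →+ GM)
    (i₁ i₂ : N →+ M)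
    (h₁ : ¬ Function.Injective i₁) (h₂ : ¬ Function.Injective i₂)
    (I₁ I₂ : GN →+ GM)
    (hI₁ : I₁.comp ηN = ηM.comp i₁) (hI₂ : I₂.comp ηN = ηM.comp i₂) :
    ∃ n₁ n₂ : GN,
      n₁ ∉ AddMonoidHom.mrange ηN ∧ n₂ ∉ AddMonoidHom.mrange ηN ∧
      I₁ n₁ = 0 ∧ I₂ n₂ = 0 ∧
      (∀ x ∈ saturationOf
          (↑(AddSubmonoid.closure ((AddMonoidHom.mrange ηN : Set GN) ∪ {-n₁, -n₂})) : Set GN),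
        -x ∈ saturationOf
          (↑(AddSubmonoid.closure ((AddMonoidHom.mrange ηN : Set GN) ∪ {-n₁, -n₂})) : Set GN) →
        x = 0) ∧
      (∀ x : GN, (∃ a : ℕ, 0 < a ∧ a • x ∈ saturationOf
          (↑(AddSubmonoid.closure ((AddMonoidHom.mrange ηN : Set GN) ∪ {-n₁, -n₂})) : Set GN)) →
        x ∈ saturationOf
          (↑(AddSubmonoid.closure ((AddMonoidHom.mrange ηN : Set GN) ∪ {-n₁, -n₂})) : Set GN)) ∧
      (∃ S : Finset GN,
        (↑(AddSubmonoid.closure (S : Set GN)) : Set GN) =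
          saturationOf
            (↑(AddSubmonoid.closure ((AddMonoidHom.mrange ηN : Set GN) ∪ {-n₁, -n₂})) : Set GN)) := by
  classical
  set P := AddMonoidHom.mrange ηN
  have hP : P.IsSharp := hNsharp.mrange_isSharp hNinj
  have hPsat : P.NSMulSaturated := fun n x hx =>
    or_iff_not_imp_left.2 fun hn => hNsat x ⟨n, Nat.pos_of_ne_zero hn, hx⟩
  have : IsAddTorsionFree GN := hP.isAddTorsionFree hPsat
  have : Module.Finite ℤ GN := Module.Finite.iff_addGroup_fg.2 hgpN.addGroup_fg
  obtain ⟨n₁, hn₁, hIn₁⟩ := exists_map_eq_zero_notMem_mrange hNinj hP hI₁ h₁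
  obtain ⟨v₂, hv₂, hIv₂⟩ := exists_map_eq_zero_notMem_mrange hNinj hP hI₂ h₂
  obtain ⟨n₂, hIn₂, hK⟩ : ∃ n₂, I₂ n₂ = 0 ∧ P.AvoidsCone n₁ n₂ :=
    (hPsat.avoidsCone_or_avoidsCone_neg hn₁ hv₂).elim (⟨v₂, hIv₂, ·⟩) (⟨-v₂, by simp [hIv₂], ·⟩)
  have hQ : (AddSubmonoid.closure ((P : Set GN) ∪ {-n₁, -n₂})).FG := by
    rw [AddSubmonoid.closure_union, AddSubmonoid.closure_eq]
    refine (AddMonoidHom.mrange_eq_map ηN ▸ hNfg.fg_top.map ηN).sup ⟨{-n₁, -n₂}, ?_⟩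
    simp
  obtain ⟨S, hS⟩ := hQ.nsmulSaturation
  exact ⟨n₁, n₂, hn₁, hK.right_notMem, hIn₁, hIn₂, (hP.closure_union_neg_pair hK).nsmulSaturation,
    fun x ⟨a, ha, hx⟩ => (AddSubmonoid.nsmulSaturated_nsmulSaturation _ hx).resolve_left ha.ne', S,
    congrArg SetLike.coe hS⟩

/-- Let `M` be a monoid, `N` a sharp fs monoid, and `i₁, i₂ : N → M` morphisms of monoids,
neither of which is injective.  Then there exist `n₁, n₂ ∈ N^gp \ N` such that the
saturation of the submonoid of `N^gp` generated by `N`, `-n₁` and `-n₂` is a sharp fs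
monoid, and `i₁^gp n₁ = 0` and `i₂^gp n₂ = 0`.  Here `N` is realized inside its
groupification `GN` via `ηN`, and `I₁, I₂` are the morphisms induced by `i₁, i₂` on
groupifications. -/
theorem stmt2 {N M GN GM : Type*} [AddCommMonoid N] [AddCommMonoid M]
    [AddCommGroup GN] [AddCommGroup GM]
    (ηN : N →+ GN) (hgpN : IsGroupification ηN) (hNinj : Function.Injective ηN)
    (hNsharp : IsSharp N) (hNfg : AddMonoid.FG N)
    (hNsat : ∀ x : GN, (∃ a : ℕ, 0 < a ∧ a • x ∈ AddMonoidHom.mrange ηN) →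
      x ∈ AddMonoidHom.mrange ηN)
    (ηM : M →+ GM) (hgpM : IsGroupification ηM)
    (i₁ i₂ : N →+ M)
    (h₁ : ¬ Function.Injective i₁) (h₂ : ¬ Function.Injective i₂)
    (I₁ I₂ : GN →+ GM)
    (hI₁ : I₁.comp ηN = ηM.comp i₁) (hI₂ : I₂.comp ηN = ηM.comp i₂) :
    ∃ n₁ n₂ : GN,
      n₁ ∉ AddMonoidHom.mrange ηN ∧ n₂ ∉ AddMonoidHom.mrange ηN ∧
      I₁ n₁ = 0 ∧ I₂ n₂ = 0 ∧
      (∀ x ∈ saturationOf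
          (↑(AddSubmonoid.closure ((AddMonoidHom.mrange ηN : Set GN) ∪ {-n₁, -n₂})) : Set GN),
        -x ∈ saturationOf
          (↑(AddSubmonoid.closure ((AddMonoidHom.mrange ηN : Set GN) ∪ {-n₁, -n₂})) : Set GN) →
        x = 0) ∧
      (∀ x : GN, (∃ a : ℕ, 0 < a ∧ a • x ∈ saturationOf
          (↑(AddSubmonoid.closure ((AddMonoidHom.mrange ηN : Set GN) ∪ {-n₁, -n₂})) : Set GN)) →
        x ∈ saturationOf
          (↑(AddSubmonoid.closure ((AddMonoidHom.mrange ηN : Set GN) ∪ {-n₁, -n₂})) : Set GN)) ∧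
      (∃ S : Finset GN,
        (↑(AddSubmonoid.closure (S : Set GN)) : Set GN) =
          saturationOf
            (↑(AddSubmonoid.closure ((AddMonoidHom.mrange ηN : Set GN) ∪ {-n₁, -n₂})) : Set GN)) :=
  stmt2_general ηN hgpN hNinj hNsharp hNfg hNsat ηM i₁ i₂ h₁ h₂ I₁ I₂ hI₁ hI₂
end

section
/- Let P be a commutative monoid that is sharp, quasi-integral, and finitely generated. Then P^int (the image of P in its groupification) is sharp and fine, and P^sat (the saturation of P^int inside P^gp) is an fs monoid. -/
/-
Sharpness of `P^int` comes from quasi-integrality: if `ηP a + ηP b = 0` then `a + b = 0`, so `a`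
is a unit of the sharp monoid `P`. The substance is Gordan's lemma for `P^sat`. If `a • x` is a sum
`∑ n v • v` of generators, dividing the coefficients by `a` with remainder writes `x` as a
combination of generators plus a point of the half-open parallelotope spanned by them. Those points
are finitely many: a homomorphism `G →+ ℤⁿ` with finite kernel (through `G ⧸ torsion`) moves them
into a bounded box, with coordinates bounded by the sum of those of the generators.
-/

section Saturation

variable {G : Type*} [AddCommGroup G]

theorem saturationOf_saturationOf_subset (P : Set G) :
    saturationOf (saturationOf P) ⊆ saturationOf P := by
  rintro x ⟨a, ha, b, hb, hbax⟩
  exact ⟨b * a, Nat.mul_pos hb ha, by rwa [mul_smul]⟩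

def AddSubmonoid.sat (Q : AddSubmonoid G) : AddSubmonoid G where
  carrier := saturationOf Q
  zero_mem' := ⟨1, one_pos, by simp⟩
  add_mem' := by
    rintro x y ⟨a, ha, hax⟩ ⟨b, hb, hby⟩
    refine ⟨a * b, Nat.mul_pos ha hb, ?_⟩
    rw [smul_add, mul_smul, mul_smul, smul_comm a b x]
    exact add_mem (Q.nsmul_mem hax b) (Q.nsmul_mem hby a)

/-- In `ℚ ⊗ G` these are the points of `G` lying in the half-open parallelotope
`∑ v ∈ s, [0, 1) • v`. -/
def halfOpenParallelotope (s : Finset G) : Set G :=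
  {y | ∃ a : ℕ, 0 < a ∧ ∃ n : G → ℕ, (∀ v ∈ s, n v < a) ∧ a • y = ∑ v ∈ s, n v • v}

theorem AddSubmonoid.sat_closure_eq (s : Finset G) :
    (closure (s : Set G)).sat = closure (s ∪ halfOpenParallelotope s) := by
  apply le_antisymm
  · rintro x ⟨a, ha, hax⟩
    obtain ⟨n, -, hn⟩ := mem_closure_finset.1 hax
    set y := x - ∑ v ∈ s, (n v / a) • v
    have hy : y ∈ halfOpenParallelotope s := by
      refine ⟨a, ha, fun v => n v % a, fun v _ => Nat.mod_lt _ ha, ?_⟩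
      have hsplit : ∑ v ∈ s, n v • v =
          ∑ v ∈ s, (n v % a) • v + a • ∑ v ∈ s, (n v / a) • v := by
        simp only [Finset.smul_sum, ← mul_smul, ← Finset.sum_add_distrib, ← add_smul,
          Nat.mod_add_div]
      rw [smul_sub, ← hn, hsplit, add_sub_cancel_right]
    rw [← sub_add_cancel x (∑ v ∈ s, (n v / a) • v)]
    exact add_mem (subset_closure (Set.mem_union_right _ hy))
      (sum_mem _ fun v hv => nsmul_mem (subset_closure (Set.mem_union_left _ hv)) _)
  · refine closure_le.2 (Set.union_subset (fun v hv => ⟨1, one_pos, ?_⟩) ?_)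
    · simpa using subset_closure hv
    · rintro y ⟨a, ha, n, -, hy⟩
      refine ⟨a, ha, ?_⟩
      rw [SetLike.mem_coe, hy]
      exact sum_mem _ fun v hv => nsmul_mem (subset_closure hv) _

theorem abs_le_sum_abs_of_nsmul_eq_sum {R κ : Type*} [AddCommGroup R] [LinearOrder R]
    [IsOrderedAddMonoid R] (s : Finset κ) (v : κ → R) {n : κ → ℕ} {a : ℕ} (ha : 0 < a)
    (hn : ∀ k ∈ s, n k ≤ a) {y : R} (hy : a • y = ∑ k ∈ s, n k • v k) :
    |y| ≤ ∑ k ∈ s, |v k| := by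
  refine le_of_nsmul_le_nsmul_right ha.ne' ?_
  calc a • |y| = |∑ k ∈ s, n k • v k| := by rw [← hy, abs_nsmul]
    _ ≤ ∑ k ∈ s, n k • |v k| := by
      simpa only [abs_nsmul] using Finset.abs_sum_le_sum_abs (fun k => n k • v k) s
    _ ≤ a • ∑ k ∈ s, |v k| := by
      rw [Finset.smul_sum]
      exact Finset.sum_le_sum fun k hk => nsmul_le_nsmul_left (abs_nonneg _) (hn k hk)

theorem AddMonoidHom.finite_preimage_of_finite_ker {H : Type*} [AddCommGroup H] (f : G →+ H)
    (hf : (f.ker : Set G).Finite) {t : Set H} (ht : t.Finite) : (f ⁻¹' t).Finite := by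
  refine ht.preimage' fun b _ => ?_
  rcases (f ⁻¹' {b}).eq_empty_or_nonempty with h | ⟨x, hx⟩
  · simp [h]
  · refine (hf.image (x + ·)).subset fun y hy => ⟨y - x, ?_, add_sub_cancel x y⟩
    simp_all [mem_ker]

theorem finite_halfOpenParallelotope_of_finite_ker {ι : Type*} [Finite ι] (φ : G →+ (ι → ℤ))
    (hφ : (φ.ker : Set G).Finite) (s : Finset G) : (halfOpenParallelotope s).Finite := by
  let bound i := ∑ v ∈ s, |φ v i|
  refine (φ.finite_preimage_of_finite_ker hφ
    (Set.Finite.pi fun i => Set.finite_Icc (-bound i) (bound i))).subset ?_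
  rintro y ⟨a, ha, n, hn, hy⟩ i -
  have hyi : a • φ y i = ∑ v ∈ s, n v • φ v i := by
    simpa using congrFun (congrArg φ hy) i
  exact abs_le.1 <|
    abs_le_sum_abs_of_nsmul_eq_sum s (fun v => φ v i) ha (fun v hv => (hn v hv).le) hyi

theorem AddCommGroup.exists_addMonoidHom_pi_int_finite_ker [AddGroup.FG G] :
    ∃ (n : ℕ) (φ : G →+ (Fin n → ℤ)), (φ.ker : Set G).Finite := by
  let T := Submodule.torsion ℤ G
  let φ := (Module.finBasis ℤ (G ⧸ T)).equivFun.toAddMonoidHom.comp T.mkQ.toAddMonoidHom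
  have hker : (φ.ker : Set G) = T := by
    ext x
    simp [φ, Submodule.Quotient.mk_eq_zero]
  have : Finite T := Module.finite_of_fg_torsion T Submodule.torsion_isTorsion
  exact ⟨_, φ, hker ▸ Set.toFinite _⟩

/-- Gordan's lemma. -/
theorem AddSubmonoid.FG.sat [AddGroup.FG G] {Q : AddSubmonoid G} (hQ : Q.FG) : Q.sat.FG := by
  classical
  obtain ⟨n, φ, hφ⟩ := AddCommGroup.exists_addMonoidHom_pi_int_finite_ker (G := G)
  obtain ⟨s, rfl⟩ := hQ
  have hfin := finite_halfOpenParallelotope_of_finite_ker φ hφ s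
  refine ⟨s ∪ hfin.toFinset, ?_⟩
  rw [sat_closure_eq, Finset.coe_union, Set.Finite.coe_toFinset]

theorem AddGroup.fg_of_forall_eq_sub {Q : AddSubmonoid G} (hQ : Q.FG)
    (h : ∀ x : G, ∃ a ∈ Q, ∃ b ∈ Q, x = a - b) : AddGroup.FG G := by
  obtain ⟨t, rfl⟩ := hQ
  have hle : AddSubmonoid.closure (t : Set G) ≤ (AddSubgroup.closure (t : Set G)).toAddSubmonoid :=
    AddSubmonoid.closure_le.2 AddSubgroup.subset_closure
  refine ⟨⟨t, eq_top_iff.2 fun x _ => ?_⟩⟩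
  obtain ⟨a, ha, b, hb, rfl⟩ := h x
  exact sub_mem (hle ha) (hle hb)

end Saturation

theorem IsSharp.eq_zero_of_mem_mrange_of_neg_mem {M G : Type*} [AddCommMonoid M] [AddCommGroup G]
    (hM : IsSharp M) {f : M →+ G} (hf : ∀ p, f p = 0 → p = 0) {x : G}
    (hx : x ∈ AddMonoidHom.mrange f) (hnx : -x ∈ AddMonoidHom.mrange f) : x = 0 := by
  obtain ⟨a, rfl⟩ := hx
  obtain ⟨b, hb⟩ := hnx
  have hab : a + b = 0 := hf _ (by rw [map_add, hb, add_neg_cancel])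
  rw [hM a ⟨⟨a, b, hab, by rwa [add_comm]⟩, rfl⟩, map_zero]

/-- Let `P` be a commutative monoid that is sharp, quasi-integral, and finitely
generated.  Then `P^int` (the image of `P` in its groupification) is sharp and fine
(finitely generated; integrality is automatic for a submonoid of a group), and `P^sat`
(the saturation of `P^int` inside `P^gp`) is an fs monoid (saturated and finitely
generated). -/
theorem stmt17 {P Pgp : Type*} [AddCommMonoid P] [AddCommGroup Pgp]
    (ηP : P →+ Pgp) (hgpP : IsGroupification ηP)
    (hsharp : IsSharp P)
    (hqi : ∀ p : P, ηP p = 0 → p = 0)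
    (hfg : AddMonoid.FG P) :
    (∀ x ∈ AddMonoidHom.mrange ηP, -x ∈ AddMonoidHom.mrange ηP → x = 0) ∧
    (AddMonoidHom.mrange ηP).FG ∧
    (∀ x : Pgp,
      (∃ a : ℕ, 0 < a ∧ a • x ∈ saturationOf (↑(AddMonoidHom.mrange ηP) : Set Pgp)) →
        x ∈ saturationOf (↑(AddMonoidHom.mrange ηP) : Set Pgp)) ∧
    (∃ S : Finset Pgp,
      (↑(AddSubmonoid.closure (S : Set Pgp)) : Set Pgp) =
        saturationOf (↑(AddMonoidHom.mrange ηP) : Set Pgp)) := by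
  have hint : (AddMonoidHom.mrange ηP).FG := by
    rw [AddMonoidHom.mrange_eq_map]
    exact hfg.fg_top.map ηP
  have : AddGroup.FG Pgp := AddGroup.fg_of_forall_eq_sub hint fun x => by
    obtain ⟨a, b, rfl⟩ := hgpP.1 x
    exact ⟨ηP a, ⟨a, rfl⟩, ηP b, ⟨b, rfl⟩, rfl⟩
  obtain ⟨S, hS⟩ := hint.sat
  exact ⟨fun x hx hnx => IsSharp.eq_zero_of_mem_mrange_of_neg_mem hsharp hqi hx hnx, hint,
    fun x hx => saturationOf_saturationOf_subset _ hx, S, congrArg SetLike.coe hS⟩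
end
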